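/- Let I be an ideal of a wEMV-algebra (M; ∨, ∧, ⊕, ⊖, 0). Then the relation θ_I := {(x, y) ∈ M × M : x ⊖ y ∈ I and y ⊖ x ∈ I} is a congruence relation on M; that is, θ_I is an equivalence relation and for every z ∈ M and every (x, y) ∈ θ_I and every operation * ∈ {∨, ∧, ⊕, ⊖}, both (x * z, y * z) ∈ θ_I and (z * x, z * y) ∈ θ_I. -/

import Mathlib

/-!
Every operation is "contractive" for the pseudo-distance `x ⊖ y ⊔ y ⊖ x`: for instance
`(x ⊔ z) ⊖ (y ⊔ z) ≤ x ⊖ y` and `(z ⊖ x) ⊖ (z ⊖ y) ≤ y ⊖ x`. Since an ideal is downward closed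
and contains `a ⊔ b ≤ a ⊕ b` whenever it contains `a` and `b`, each operation preserves `θ_I`.
Transitivity comes from the triangle inequality `x ⊖ z ≤ (x ⊖ y) ⊕ (y ⊖ z)`.
-/

universe u

class WEMV (M : Type u) extends DistribLattice M, Zero M where
  oplus : M → M → M
  ominus : M → M → M
  zero_le : ∀ x : M, 0 ≤ x
  oplus_comm : ∀ x y : M, oplus x y = oplus y x
  oplus_assoc : ∀ x y z : M, oplus (oplus x y) z = oplus x (oplus y z)
  oplus_zero : ∀ x : M, oplus x 0 = x
  ominus_oplus_le : ∀ x y : M, ominus (oplus x y) x ≤ y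
  oplus_ominus : ∀ x y : M, oplus x (ominus y x) = x ⊔ y
  ominus_inf : ∀ x y : M, ominus x (x ⊓ y) = ominus x y
  ominus_ominus : ∀ x z : M, ominus z (ominus z x) = x ⊓ z
  ominus_sup : ∀ x y z : M, ominus z (x ⊔ y) = ominus z x ⊓ ominus z y
  inf_ominus : ∀ x y z : M, ominus (x ⊓ y) z = ominus x z ⊓ ominus y z
  ominus_oplus_assoc : ∀ x y z : M, ominus x (oplus y z) = ominus (ominus x y) z
  oplus_sup : ∀ x y z : M, oplus x (y ⊔ z) = oplus x y ⊔ oplus x z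

open WEMV

namespace WEMV

variable {M : Type u} [WEMV M]

lemma ominus_self (x : M) : ominus x x = 0 :=
  le_antisymm (by simpa only [oplus_zero] using ominus_oplus_le x 0) (zero_le _)

lemma ominus_le_ominus_right {x y : M} (h : x ≤ y) (z : M) : ominus x z ≤ ominus y z := by
  rw [← inf_eq_left.mpr h, inf_ominus]
  exact inf_le_right

lemma ominus_le_ominus_left {x y : M} (h : x ≤ y) (z : M) : ominus z y ≤ ominus z x := by
  rw [← sup_eq_right.mpr h, ominus_sup]
  exact inf_le_left

lemma oplus_le_oplus_left {x y : M} (h : x ≤ y) (z : M) : oplus z x ≤ oplus z y := by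
  rw [← sup_eq_right.mpr h, oplus_sup]
  exact le_sup_left

lemma oplus_le_oplus_right {x y : M} (h : x ≤ y) (z : M) : oplus x z ≤ oplus y z := by
  simpa only [oplus_comm _ z] using oplus_le_oplus_left h z

lemma le_self_oplus (x y : M) : x ≤ oplus x y := by
  simpa only [oplus_zero] using oplus_le_oplus_left (zero_le y) x

lemma sup_le_oplus (x y : M) : x ⊔ y ≤ oplus x y :=
  sup_le (le_self_oplus x y) (oplus_comm y x ▸ le_self_oplus y x)

lemma ominus_le_of_le_oplus {x y c : M} (h : x ≤ oplus y c) : ominus x y ≤ c :=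
  (ominus_le_ominus_right h y).trans (ominus_oplus_le y c)

lemma ominus_le_ominus_oplus_ominus (x y z : M) :
    ominus x z ≤ oplus (ominus x y) (ominus y z) := by
  apply ominus_le_of_le_oplus
  calc x ≤ oplus y (ominus x y) := oplus_ominus y x ▸ le_sup_right
    _ ≤ oplus (oplus z (ominus y z)) (ominus x y) :=
        oplus_le_oplus_right (oplus_ominus z y ▸ le_sup_right) _
    _ = oplus z (oplus (ominus x y) (ominus y z)) := by
        rw [oplus_assoc, oplus_comm (ominus y z)]

lemma sup_ominus_sup_le (x y z : M) : ominus (x ⊔ z) (y ⊔ z) ≤ ominus x y := by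
  apply ominus_le_of_le_oplus
  rw [oplus_comm, oplus_sup]
  exact sup_le_sup (oplus_comm y _ ▸ oplus_ominus y x ▸ le_sup_right)
    (oplus_comm z _ ▸ le_self_oplus z _)

lemma inf_ominus_inf_le (x y z : M) : ominus (x ⊓ z) (y ⊓ z) ≤ ominus x y :=
  calc ominus (x ⊓ z) (y ⊓ z) ≤ ominus (x ⊓ z) (x ⊓ z ⊓ y) :=
        ominus_le_ominus_left (le_inf inf_le_right (inf_le_left.trans inf_le_right)) _
    _ = ominus (x ⊓ z) y := ominus_inf _ _
    _ ≤ ominus x y := ominus_le_ominus_right inf_le_left y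

lemma oplus_ominus_oplus_le (x y z : M) : ominus (oplus x z) (oplus y z) ≤ ominus x y := by
  apply ominus_le_of_le_oplus
  calc oplus x z = oplus z x := oplus_comm x z
    _ ≤ oplus z (y ⊔ x) := oplus_le_oplus_left le_sup_right z
    _ = oplus (oplus y z) (ominus x y) := by rw [← oplus_ominus, oplus_comm y z, oplus_assoc]

lemma ominus_ominus_ominus_le_right (x y z : M) :
    ominus (ominus x z) (ominus y z) ≤ ominus x y := by
  rw [← ominus_oplus_assoc, oplus_ominus]
  exact ominus_le_ominus_left le_sup_right x

lemma ominus_ominus_ominus_le_left (x y z : M) :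
    ominus (ominus z x) (ominus z y) ≤ ominus y x :=
  ominus_le_of_le_oplus (ominus_le_ominus_oplus_ominus z y x)

/-- The relation `θ_I` of an ideal `I`. -/
def IdealRel (I : Set M) (x y : M) : Prop := ominus x y ∈ I ∧ ominus y x ∈ I

section Ideal

variable {I : Set M} (hdown : ∀ x y : M, y ≤ x → x ∈ I → y ∈ I)
  (hplus : ∀ x ∈ I, ∀ y ∈ I, oplus x y ∈ I)
include hdown hplus

lemma idealRel_equivalence (hne : I.Nonempty) : Equivalence (IdealRel I) := by
  obtain ⟨a, ha⟩ := hne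
  have hzero : (0 : M) ∈ I := hdown a 0 (zero_le a) ha
  refine ⟨fun x => ?_, fun h => ⟨h.2, h.1⟩, fun {x y z} hxy hyz => ?_⟩
  · rw [IdealRel, ominus_self]
    exact ⟨hzero, hzero⟩
  · exact ⟨hdown _ _ (ominus_le_ominus_oplus_ominus x y z) (hplus _ hxy.1 _ hyz.1),
      hdown _ _ (ominus_le_ominus_oplus_ominus z y x) (hplus _ hyz.2 _ hxy.2)⟩

lemma IdealRel.map {f : M → M} (hf : ∀ a b, ominus (f a) (f b) ≤ ominus a b ⊔ ominus b a)
    {x y : M} (h : IdealRel I x y) : IdealRel I (f x) (f y) := by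
  have hsup : ∀ a b, IdealRel I a b → ominus a b ⊔ ominus b a ∈ I := fun a b h =>
    hdown _ _ (sup_le_oplus _ _) (hplus _ h.1 _ h.2)
  exact ⟨hdown _ _ (hf x y) (hsup x y h), hdown _ _ (hf y x) (hsup y x ⟨h.2, h.1⟩)⟩

end Ideal

end WEMV

theorem stmt9 {M : Type u} [WEMV M] (I : Set M)
    (hne : I.Nonempty)
    (hdown : ∀ x y : M, y ≤ x → x ∈ I → y ∈ I)
    (hplus : ∀ x ∈ I, ∀ y ∈ I, oplus x y ∈ I) :
    Equivalence (fun x y : M => ominus x y ∈ I ∧ ominus y x ∈ I) ∧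
    (∀ x y z : M, (ominus x y ∈ I ∧ ominus y x ∈ I) →
      ((ominus (x ⊔ z) (y ⊔ z) ∈ I ∧ ominus (y ⊔ z) (x ⊔ z) ∈ I) ∧
       (ominus (z ⊔ x) (z ⊔ y) ∈ I ∧ ominus (z ⊔ y) (z ⊔ x) ∈ I) ∧
       (ominus (x ⊓ z) (y ⊓ z) ∈ I ∧ ominus (y ⊓ z) (x ⊓ z) ∈ I) ∧
       (ominus (z ⊓ x) (z ⊓ y) ∈ I ∧ ominus (z ⊓ y) (z ⊓ x) ∈ I) ∧
       (ominus (oplus x z) (oplus y z) ∈ I ∧ ominus (oplus y z) (oplus x z) ∈ I) ∧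
       (ominus (oplus z x) (oplus z y) ∈ I ∧ ominus (oplus z y) (oplus z x) ∈ I) ∧
       (ominus (ominus x z) (ominus y z) ∈ I ∧ ominus (ominus y z) (ominus x z) ∈ I) ∧
       (ominus (ominus z x) (ominus z y) ∈ I ∧ ominus (ominus z y) (ominus z x) ∈ I))) := by
  refine ⟨idealRel_equivalence hdown hplus hne, fun x y z (h : IdealRel I x y) => ?_⟩
  have map := fun {f : M → M} (hf : ∀ a b, ominus (f a) (f b) ≤ ominus a b) =>
    h.map hdown hplus (f := f) fun a b => (hf a b).trans le_sup_left
  exact ⟨map (sup_ominus_sup_le · · z),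
    map fun a b => by simpa only [sup_comm z] using sup_ominus_sup_le a b z,
    map (inf_ominus_inf_le · · z),
    map fun a b => by simpa only [inf_comm z] using inf_ominus_inf_le a b z,
    map (oplus_ominus_oplus_le · · z),
    map fun a b => by simpa only [oplus_comm z] using oplus_ominus_oplus_le a b z,
    map (ominus_ominus_ominus_le_right · · z),
    h.map hdown hplus fun a b => (ominus_ominus_ominus_le_left a b z).trans le_sup_right⟩
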